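/- Let n ≥ 2, let S_1,…,S_n be nonempty ordered tuples of positive integers with S_i = (a_{i(1)},…,a_{i(m_i)}), and let k be a positive integer. Then the chromatic polynomial of the clique-theta graph T(1,S_1,…,S_n,k) equals the product of [(X)_{a_{n(m_n)}+k} · ∏_{i=1}^{n−1}(X−k−1)_{a_{i(m_i)}−1} · ∏_{i=1}^{n} ∏_{l=1}^{m_i−1}(X−a_{i(l+1)}−1)_{a_{i(l)}−1}] with [k·(X−k)^{n−1}·∏_{i=1}^{n} r(1,a_{i(1)},…,a_{i(m_i)};X) + ∏_{i=1}^{n} r(1,a_{i(1)},…,a_{i(m_i)},k;X)]. -/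

import Mathlib

/-!
Colour the apex and the terminal `k`-clique first. Given these colours the clique-paths are
coloured independently, and the number of colourings of a path depends only on whether the apex
colour occurs on the terminal clique. Peeling off the clique next to the terminal end turns this
into a two-state recursion. Multiplied by `X`, its solution is a product of falling factorials
times `∏ (X - a) · (X - s) - ∏ (-a) · (-s)` or `(X - s) · (∏ (X - a) - ∏ (-a))`, which is where
the polynomials `r` of the statement come from. Both sides then agree at every natural number `q`.
-/

open Polynomial

/-- `P` is the chromatic polynomial of `G`: for every natural number `q`, evaluating `P`
at `q` gives the number of proper `q`-colourings of `G`. -/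
def IsChromaticPoly {V : Type} (G : SimpleGraph V) (P : Polynomial ℤ) : Prop :=
  ∀ q : ℕ, P.eval (q : ℤ) = Nat.card (G.Coloring (Fin q))

/-- The falling-factorial polynomial `(Y)_m = Y (Y-1) ⋯ (Y-m+1)`. -/
noncomputable def fallPoly (Y : Polynomial ℤ) (m : ℕ) : Polynomial ℤ :=
  ∏ t ∈ Finset.range m, (Y - C (t : ℤ))

/-- `∏ (X - a)` over a list of naturals. -/
noncomputable def prodL (L : List ℕ) : Polynomial ℤ := (L.map fun a => X - C (a : ℤ)).prod

/-- `∏ (-a)` over a list of naturals. -/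
def negProd (L : List ℕ) : ℤ := (L.map fun a => (-(a : ℤ))).prod

/-- Vertices of the clique-theta graph `T(j, S_1, …, S_n, k)`: a vertex of the initial
`j`-clique, a vertex of the `l`-th internal clique of the `i`-th clique-path, or a vertex
of the terminal `k`-clique. -/
abbrev CliqueThetaVertex (j : ℕ) {n : ℕ} (S : Fin n → List ℕ) (k : ℕ) : Type :=
  Fin j ⊕ ((Σ i : Fin n, Σ l : Fin (S i).length, Fin ((S i).get l)) ⊕ Fin k)

/-- One-directional adjacency relation for a clique-theta graph: same clique, or
consecutive cliques along one of the clique-paths. -/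
def cliqueThetaRel (j : ℕ) {n : ℕ} (S : Fin n → List ℕ) (k : ℕ) :
    CliqueThetaVertex j S k → CliqueThetaVertex j S k → Prop
  | Sum.inl _, Sum.inl _ => True
  | Sum.inl _, Sum.inr (Sum.inl ⟨_, l, _⟩) => l.val = 0
  | Sum.inr (Sum.inl ⟨i, l, _⟩), Sum.inr (Sum.inr _) => l.val + 1 = (S i).length
  | Sum.inr (Sum.inr _), Sum.inr (Sum.inr _) => True
  | Sum.inr (Sum.inl ⟨i, l, _⟩), Sum.inr (Sum.inl ⟨i', l', _⟩) =>
      i.val = i'.val ∧ (l.val = l'.val ∨ l.val + 1 = l'.val)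
  | _, _ => False

/-- The clique-theta graph `T(j, S_1, …, S_n, k)`, obtained from the clique-paths
`L(j, S_i, k)`, `1 ≤ i ≤ n`, by identifying their initial `j`-cliques into a single
`j`-clique and their terminal `k`-cliques into a single `k`-clique. -/
def cliqueThetaGraph (j : ℕ) {n : ℕ} (S : Fin n → List ℕ) (k : ℕ) :
    SimpleGraph (CliqueThetaVertex j S k) where
  Adj x y := x ≠ y ∧ (cliqueThetaRel j S k x y ∨ cliqueThetaRel j S k y x)
  symm := ⟨fun x y h => ⟨h.1.symm, h.2.symm⟩⟩
  loopless := ⟨fun x h => h.1 rfl⟩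

open Finset

lemma fallPoly_succ (Y : ℤ[X]) (n : ℕ) : fallPoly Y (n + 1) = fallPoly Y n * (Y - C (n : ℤ)) :=
  prod_range_succ _ _

lemma fallPoly_succ' (Y : ℤ[X]) (n : ℕ) : fallPoly Y (n + 1) = Y * fallPoly (Y - 1) n := by
  rw [fallPoly, prod_range_succ', mul_comm, fallPoly]
  simp only [Nat.cast_add, Nat.cast_one, map_add, map_one, Nat.cast_zero, map_zero, sub_zero,
    sub_sub, add_comm]

lemma fallPoly_add (Y : ℤ[X]) (m n : ℕ) :
    fallPoly Y (m + n) = fallPoly Y m * fallPoly (Y - C (m : ℤ)) n := by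
  simp only [fallPoly, prod_range_add, Nat.cast_add, map_add, sub_sub]

lemma fallPoly_X_sub_C_succ (s : ℤ) (n : ℕ) :
    fallPoly (X - C s) (n + 1) = (X - C s) * fallPoly (X - C (s + 1)) n := by
  rw [fallPoly_succ', map_add, map_one, sub_sub]

lemma eval_fallPoly (Y : ℤ[X]) (n : ℕ) (x : ℤ) :
    (fallPoly Y n).eval x = (descPochhammer ℤ n).eval (Y.eval x) := by
  simp [fallPoly, eval_prod, descPochhammer_eval_eq_prod_range]

variable {α : Type*}

abbrev AvoidingEmbedding (α : Type*) (n : ℕ) (W : Finset α) : Type _ :=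
  {b : Fin n ↪ α // ∀ v, b v ∉ W}

section Counting

variable [Fintype α] [DecidableEq α]

lemma card_avoidingEmbedding (n : ℕ) (W : Finset α) :
    (Nat.card (AvoidingEmbedding α n W) : ℤ) =
      (fallPoly (X - C (#W : ℤ)) n).eval (Fintype.card α : ℤ) := by
  let e : AvoidingEmbedding α n W ≃ (Fin n ↪ {x // x ∉ W}) :=
    { toFun b := b.1.codRestrict _ b.2
      invFun b := ⟨b.trans (Function.Embedding.subtype _), fun v => (b v).2⟩
      left_inv _ := rfl
      right_inv _ := rfl }
  have hW : #W ≤ Fintype.card α := card_le_univ W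
  rw [Nat.card_congr e, Nat.card_eq_fintype_card, Fintype.card_embedding_eq, eval_fallPoly]
  simp [Fintype.card_subtype_compl, Fintype.card_coe, descPochhammer_eval_eq_descFactorial,
    ← Nat.cast_sub hW]

lemma sum_avoidingEmbedding {R : Type*} [CommRing R] (n : ℕ) (W : Finset α) (c : α)
    (F : Bool → R) :
    ∑ b : AvoidingEmbedding α n W, F (c ∈ univ.map b.1) =
      Nat.card (AvoidingEmbedding α n (insert c W)) * F false
        + (Nat.card (AvoidingEmbedding α n W) - Nat.card (AvoidingEmbedding α n (insert c W)) : R)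
          * F true := by
  have hmiss : #{b : AvoidingEmbedding α n W | c ∉ univ.map b.1} =
      Nat.card (AvoidingEmbedding α n (insert c W)) := by
    rw [← Fintype.card_subtype, ← Nat.card_eq_fintype_card]
    refine Nat.card_congr <| (Equiv.subtypeSubtypeEquivSubtypeInter
      (fun b : Fin n ↪ α => ∀ v, b v ∉ W) (fun b => c ∉ univ.map b)).trans
        (Equiv.subtypeEquivRight fun b => ?_)
    simp [forall_and, eq_comm, and_comm]
  have hall := card_filter_add_card_filter_not (s := (univ : Finset (AvoidingEmbedding α n W)))
    (fun b => c ∈ univ.map b.1)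
  rw [card_univ, ← Nat.card_eq_fintype_card, hmiss] at hall
  have hF (b : AvoidingEmbedding α n W) :
      F (c ∈ univ.map b.1) = if c ∈ univ.map b.1 then F true else F false := by
    split_ifs with h <;> simp [h]
  simp_rw [hF, sum_ite, sum_const, nsmul_eq_mul, hmiss, ← hall]
  push_cast
  ring

end Counting

abbrev PathVertex {m : ℕ} (a : Fin m → ℕ) : Type := Σ l : Fin m, Fin (a l)

/-- A colouring of the clique-path `L(a 0, …, a (m - 1))` that stays proper after joining its
first clique to an apex of colour `c` and its last clique to a terminal clique with colours `W`. -/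
structure IsPathColoring {m : ℕ} (a : Fin m → ℕ) (c : α) (W : Finset α)
    (f : PathVertex a → α) : Prop where
  ne_of_adj : ∀ x y : PathVertex a, x ≠ y → (x.1.val = y.1.val ∨ x.1.val + 1 = y.1.val) →
    f x ≠ f y
  ne_apex : ∀ x : PathVertex a, x.1.val = 0 → f x ≠ c
  notMem_terminal : ∀ x : PathVertex a, x.1.val + 1 = m → f x ∉ W

abbrev PathColoring {m : ℕ} (a : Fin m → ℕ) (c : α) (W : Finset α) : Type _ :=
  {f : PathVertex a → α // IsPathColoring a c W f}

namespace PathVertex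

variable {m : ℕ} {a : Fin (m + 1) → ℕ}

def castSucc (x : PathVertex (Fin.init a)) : PathVertex a := ⟨x.1.castSucc, x.2⟩

def last (v : Fin (a (Fin.last m))) : PathVertex a := ⟨Fin.last m, v⟩

lemma castSucc_injective : Function.Injective (castSucc (a := a)) := by
  rintro ⟨l, v⟩ ⟨l', v'⟩ h
  obtain rfl : l = l' := Fin.castSucc_injective _ (congrArg Sigma.fst h)
  exact congrArg _ (eq_of_heq (Sigma.mk.inj_iff.1 h).2)

lemma last_injective : Function.Injective (last (a := a)) := by
  intro v v' h
  simpa [last] using h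

def snoc (g : PathVertex (Fin.init a) → α) (b : Fin (a (Fin.last m)) → α) : PathVertex a → α :=
  fun x => Fin.lastCases (motive := fun l => Fin (a l) → α) b (fun l v => g ⟨l, v⟩) x.1 x.2

@[simp] lemma snoc_castSucc (g : PathVertex (Fin.init a) → α) (b) (l : Fin m) (v) :
    snoc g b ⟨l.castSucc, v⟩ = g ⟨l, v⟩ := by
  simp [snoc]

@[simp] lemma snoc_last (g : PathVertex (Fin.init a) → α) (b) (v) :
    snoc g b ⟨Fin.last m, v⟩ = b v := by
  simp [snoc]

lemma snoc_comp (f : PathVertex a → α) : snoc (f ∘ castSucc) (f ∘ last) = f := by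
  funext ⟨l, v⟩
  induction l using Fin.lastCases <;> simp [snoc, castSucc, last]

end PathVertex

namespace IsPathColoring

variable {m : ℕ} {c : α} {W : Finset α}

lemma injective_comp_last {a : Fin (m + 1) → ℕ} {f : PathVertex a → α}
    (hf : IsPathColoring a c W f) : Function.Injective (f ∘ PathVertex.last) := by
  intro v v' h
  by_contra hne
  exact hf.ne_of_adj _ _ (PathVertex.last_injective.ne hne) (Or.inl rfl) h

lemma notMem_comp_last {a : Fin (m + 1) → ℕ} {f : PathVertex a → α}
    (hf : IsPathColoring a c W f) (v) : (f ∘ PathVertex.last) v ∉ W :=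
  hf.notMem_terminal _ rfl

lemma comp_castSucc {a : Fin (m + 2) → ℕ} {f : PathVertex a → α}
    (hf : IsPathColoring a c W f) :
    IsPathColoring (Fin.init a) c (univ.map ⟨_, hf.injective_comp_last⟩)
      (f ∘ PathVertex.castSucc) where
  ne_of_adj x y hne hxy := hf.ne_of_adj _ _ (PathVertex.castSucc_injective.ne hne) hxy
  ne_apex x hx := hf.ne_apex _ hx
  notMem_terminal x hx := by
    simp only [mem_map, mem_univ, true_and, not_exists]
    intro v hv
    refine hf.ne_of_adj _ _ (fun h => ?_) (Or.inr hx) hv.symm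
    have := congrArg (fun x : PathVertex a => x.1.val) h
    simp [PathVertex.castSucc, PathVertex.last] at this
    omega

lemma snoc {a : Fin (m + 2) → ℕ} {g : PathVertex (Fin.init a) → α}
    {b : Fin (a (Fin.last _)) ↪ α} (hb : ∀ v, b v ∉ W)
    (hg : IsPathColoring (Fin.init a) c (univ.map b) g) :
    IsPathColoring a c W (PathVertex.snoc g b) where
  ne_of_adj := by
    rintro ⟨l, v⟩ ⟨l', v'⟩ hne hll'
    induction l using Fin.lastCases <;> induction l' using Fin.lastCases <;>
      simp only [Fin.val_last, Fin.val_castSucc] at hll' <;>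
      simp only [PathVertex.snoc_last, PathVertex.snoc_castSucc]
    · exact b.injective.ne fun h => hne (by rw [h])
    · omega
    · rename_i l
      obtain rfl : l = Fin.last _ := Fin.ext (by simp; omega)
      exact fun h => hg.notMem_terminal _ rfl (h ▸ mem_map_of_mem _ (mem_univ _))
    · exact hg.ne_of_adj _ _ (fun h => hne (congrArg PathVertex.castSucc h)) hll'
  ne_apex := by
    rintro ⟨l, v⟩ hl
    induction l using Fin.lastCases
    · simp at hl
    · simpa using hg.ne_apex _ hl
  notMem_terminal := by
    rintro ⟨l, v⟩ hl
    induction l using Fin.lastCases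
    · simpa using hb v
    · simp at hl
      omega

lemma snoc_elim0 [DecidableEq α] {a : Fin 1 → ℕ} {b : Fin (a 0) ↪ α}
    (hb : ∀ v, b v ∉ insert c W) :
    IsPathColoring a c W (PathVertex.snoc (fun x => x.1.elim0) b) where
  ne_of_adj := by
    rintro ⟨l, v⟩ ⟨l', v'⟩ hne -
    obtain rfl : l = Fin.last 0 := Subsingleton.elim _ _
    obtain rfl : l' = Fin.last 0 := Subsingleton.elim _ _
    rw [PathVertex.snoc_last, PathVertex.snoc_last]
    exact b.injective.ne fun h => hne (by rw [h])
  ne_apex := by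
    rintro ⟨l, v⟩ -
    obtain rfl : l = Fin.last 0 := Subsingleton.elim _ _
    exact fun h => hb v (mem_insert.2 (Or.inl h))
  notMem_terminal := by
    rintro ⟨l, v⟩ -
    obtain rfl : l = Fin.last 0 := Subsingleton.elim _ _
    exact fun h => hb v (mem_insert_of_mem h)

end IsPathColoring

namespace PathColoring

def snocEquiv {m : ℕ} (a : Fin (m + 2) → ℕ) (c : α) (W : Finset α) :
    PathColoring a c W ≃
      Σ b : AvoidingEmbedding α (a (Fin.last _)) W, PathColoring (Fin.init a) c (univ.map b.1) where
  toFun f := ⟨⟨⟨_, f.2.injective_comp_last⟩, f.2.notMem_comp_last⟩, ⟨_, f.2.comp_castSucc⟩⟩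
  invFun p := ⟨PathVertex.snoc p.2.1 p.1.1, IsPathColoring.snoc p.1.2 p.2.2⟩
  left_inv f := Subtype.ext (PathVertex.snoc_comp f.1)
  right_inv p := Sigma.subtype_ext (Subtype.ext (by ext; simp [PathVertex.last]))
    (funext fun x => PathVertex.snoc_castSucc _ _ x.1 x.2)

def equivAvoidingEmbedding [DecidableEq α] (a : Fin 1 → ℕ) (c : α) (W : Finset α) :
    PathColoring a c W ≃ AvoidingEmbedding α (a 0) (insert c W) where
  toFun f := ⟨⟨_, f.2.injective_comp_last⟩, fun v => by
    simpa [not_or] using ⟨f.2.ne_apex _ rfl, f.2.notMem_comp_last v⟩⟩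
  invFun b := ⟨PathVertex.snoc (fun x => x.1.elim0) b.1, IsPathColoring.snoc_elim0 b.2⟩
  left_inv f := Subtype.ext <| by
    conv_rhs => rw [← PathVertex.snoc_comp f.1]
    congr
  right_inv b := Subtype.ext (by ext v; exact PathVertex.snoc_last (fun x => x.1.elim0) b.1 v)

end PathColoring

/-- Evaluated at `q`, `pathPoly a m s hit` is the number of `PathColoring`s with `q` colours of
the clique-path with clique sizes `a 0, …, a (m - 1)`, when the terminal colours form a set of size
`s` that contains the apex colour iff `hit`. The values at `m = 0` only start the recursion. -/
noncomputable def pathPoly (a : ℕ → ℕ) : ℕ → ℕ → Bool → ℤ[X]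
  | 0, _, true => 0
  | 0, _, false => 1
  | m + 1, s, true => fallPoly (X - C (s : ℤ)) (a m) * pathPoly a m (a m) false
  | m + 1, s, false =>
    fallPoly (X - C ((s : ℤ) + 1)) (a m) * pathPoly a m (a m) false
      + (fallPoly (X - C (s : ℤ)) (a m) - fallPoly (X - C ((s : ℤ) + 1)) (a m))
        * pathPoly a m (a m) true

lemma pathPoly_succ_true (a : ℕ → ℕ) (m s : ℕ) :
    pathPoly a (m + 1) s true = fallPoly (X - C (s : ℤ)) (a m) * pathPoly a m (a m) false :=
  rfl

lemma pathPoly_succ_false (a : ℕ → ℕ) (m s : ℕ) :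
    pathPoly a (m + 1) s false =
      fallPoly (X - C ((s : ℤ) + 1)) (a m) * pathPoly a m (a m) false
        + (fallPoly (X - C (s : ℤ)) (a m) - fallPoly (X - C ((s : ℤ) + 1)) (a m))
          * pathPoly a m (a m) true :=
  rfl

theorem card_pathColoring [Fintype α] [DecidableEq α] :
    ∀ {m : ℕ} (a : Fin m → ℕ) (a' : ℕ → ℕ), (∀ l : Fin m, a' l = a l) → m ≠ 0 →
      ∀ (c : α) (W : Finset α), (Nat.card (PathColoring a c W) : ℤ) =
        (pathPoly a' m #W (c ∈ W)).eval (Fintype.card α : ℤ)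
  | 0, _, _, _, h, _, _ => absurd rfl h
  | 1, a, a', ha, _, c, W => by
    rw [Nat.card_congr (PathColoring.equivAvoidingEmbedding a c W), card_avoidingEmbedding,
      card_insert_eq_ite, show a 0 = a' 0 from (ha 0).symm]
    by_cases hc : c ∈ W <;> simp [pathPoly, hc]
  | m + 2, a, a', ha, _, c, W => by
    rw [Nat.card_congr (PathColoring.snocEquiv a c W), Nat.card_sigma, Nat.cast_sum]
    have hsub (b : AvoidingEmbedding α (a (Fin.last _)) W) := card_pathColoring (Fin.init a) a'
      (fun l => ha l.castSucc) (Nat.succ_ne_zero m) c (univ.map b.1)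
    simp only [hsub, card_map, card_univ, Fintype.card_fin]
    rw [sum_avoidingEmbedding (F := fun hit => (pathPoly a' (m + 1) (a (Fin.last _)) hit).eval _),
      card_avoidingEmbedding, card_avoidingEmbedding, card_insert_eq_ite,
      show a (Fin.last _) = a' (m + 1) from (ha _).symm]
    by_cases hc : c ∈ W <;> simp [hc, pathPoly_succ_true, pathPoly_succ_false]

section Theta

variable {n : ℕ} (S : Fin n → List ℕ) (k : ℕ)

def thetaGlue (c : α) (φ : Fin k ↪ α) (f : ∀ i, PathVertex (S i).get → α) :
    CliqueThetaVertex 1 S k → α :=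
  Sum.elim (fun _ => c) (Sum.elim (fun p => f p.1 p.2) φ)

lemma thetaGlue_ne_of_rel {c : α} {φ : AvoidingEmbedding α k ∅}
    (f : ∀ i, PathColoring (S i).get c (univ.map φ.1)) {x y : CliqueThetaVertex 1 S k}
    (hne : x ≠ y) (hxy : cliqueThetaRel 1 S k x y) :
    thetaGlue S k c φ.1 (fun i => (f i).1) x ≠ thetaGlue S k c φ.1 (fun i => (f i).1) y := by
  rcases x with _ | ⟨i, x⟩ | u <;> rcases y with _ | ⟨j, y⟩ | w <;>
    simp only [cliqueThetaRel] at hxy <;> simp only [thetaGlue, Sum.elim_inl, Sum.elim_inr]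
  · exact absurd (congrArg Sum.inl (Subsingleton.elim _ _)) hne
  · exact ((f j).2.ne_apex y hxy).symm
  · obtain rfl : i = j := Fin.ext hxy.1
    exact (f i).2.ne_of_adj x y (fun h => hne (by rw [h])) hxy.2
  · exact fun h => (f i).2.notMem_terminal x hxy (h ▸ mem_map_of_mem _ (mem_univ w))
  · exact φ.1.injective.ne fun h => hne (by rw [h])

def thetaColoringEquiv :
    (cliqueThetaGraph 1 S k).Coloring α ≃
      Σ c : α, Σ φ : AvoidingEmbedding α k ∅, ∀ i, PathColoring (S i).get c (univ.map φ.1) where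
  toFun C := ⟨C (Sum.inl 0),
    ⟨⟨fun u => C (Sum.inr (Sum.inr u)), fun u w h => by
      by_contra hne
      exact C.valid (v := Sum.inr (Sum.inr u)) (w := Sum.inr (Sum.inr w))
        ⟨by simpa using hne, Or.inl trivial⟩ h⟩, fun _ => notMem_empty _⟩,
    fun i => ⟨fun x => C (Sum.inr (Sum.inl ⟨i, x⟩)),
      { ne_of_adj x y hne hxy := C.valid ⟨by simpa using hne, Or.inl ⟨rfl, hxy⟩⟩
        ne_apex x hx := (C.valid (v := Sum.inl 0) (w := Sum.inr (Sum.inl ⟨i, x⟩))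
          ⟨by simp, Or.inl hx⟩).symm
        notMem_terminal x hx := by
          simp only [mem_map, mem_univ, true_and, not_exists]
          exact fun u hu => C.valid (v := Sum.inr (Sum.inl ⟨i, x⟩)) (w := Sum.inr (Sum.inr u))
            ⟨by simp, Or.inl hx⟩ hu.symm }⟩⟩
  invFun p := SimpleGraph.Coloring.mk (thetaGlue S k p.1 p.2.1.1 fun i => (p.2.2 i).1)
    fun {x y} h => by
      rcases h with ⟨hne, hxy | hyx⟩
      · exact thetaGlue_ne_of_rel S k p.2.2 hne hxy
      · exact (thetaGlue_ne_of_rel S k p.2.2 hne.symm hyx).symm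
  left_inv C := by
    ext (a | x | u)
    · rw [Subsingleton.elim a 0]
      rfl
    · rfl
    · rfl
  right_inv p := rfl

noncomputable def thetaPoly : ℤ[X] :=
  X * (fallPoly (X - 1) k * ∏ i, pathPoly (fun l => (S i).getD l 0) (S i).length k false
    + (fallPoly X k - fallPoly (X - 1) k)
      * ∏ i, pathPoly (fun l => (S i).getD l 0) (S i).length k true)

theorem card_coloring_cliqueThetaGraph [Fintype α] [DecidableEq α] (hS : ∀ i, S i ≠ []) :
    (Nat.card ((cliqueThetaGraph 1 S k).Coloring α) : ℤ) =
      (thetaPoly S k).eval (Fintype.card α : ℤ) := by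
  have hpaths (c : α) (φ : AvoidingEmbedding α k ∅) :
      (Nat.card (∀ i, PathColoring (S i).get c (univ.map φ.1)) : ℤ) =
        (∏ i, pathPoly (fun l => (S i).getD l 0) (S i).length k (c ∈ univ.map φ.1)).eval
          (Fintype.card α : ℤ) := by
    rw [Nat.card_pi, Nat.cast_prod, eval_prod]
    refine prod_congr rfl fun i _ => ?_
    rw [card_pathColoring _ (fun l => (S i).getD l 0) (fun l => by simp) (by simpa using hS i),
      card_map, card_univ, Fintype.card_fin]
  rw [Nat.card_congr (thetaColoringEquiv S k), Nat.card_sigma, Nat.cast_sum]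
  simp_rw [Nat.card_sigma, Nat.cast_sum, hpaths]
  rw [sum_congr rfl fun c _ => sum_avoidingEmbedding k ∅ c fun hit =>
    (∏ i, pathPoly (fun l => (S i).getD l 0) (S i).length k hit).eval (Fintype.card α : ℤ)]
  simp only [card_avoidingEmbedding]
  simp [thetaPoly, eval_prod]

end Theta

noncomputable def innerFallProd (a : ℕ → ℕ) (m : ℕ) : ℤ[X] :=
  ∏ l ∈ range m, fallPoly (X - C ((a (l + 1) : ℤ) + 1)) (a l - 1)

theorem X_mul_pathPoly (a : ℕ → ℕ) (m : ℕ) (ha : ∀ l ≤ m, 0 < a l) (s : ℕ) :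
    X * pathPoly a (m + 1) s false =
        innerFallProd a m * fallPoly (X - C ((s : ℤ) + 1)) (a m - 1) *
          ((∏ l ∈ range (m + 1), (X - C (a l : ℤ))) * (X - C (s : ℤ))
            - C ((∏ l ∈ range (m + 1), (-(a l : ℤ))) * -(s : ℤ))) ∧
      X * pathPoly a (m + 1) s true =
        innerFallProd a m * fallPoly (X - C ((s : ℤ) + 1)) (a m - 1) * (X - C (s : ℤ)) *
          (∏ l ∈ range (m + 1), (X - C (a l : ℤ)) - C (∏ l ∈ range (m + 1), (-(a l : ℤ)))) := by
  induction m generalizing s with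
  | zero =>
    obtain ⟨t, hb⟩ := Nat.exists_eq_add_one.2 (ha 0 le_rfl)
    simp only [pathPoly, innerFallProd, prod_range_succ, prod_range_zero, one_mul, hb,
      Nat.add_sub_cancel, fallPoly_succ (X - C ((s : ℤ) + 1)) t, fallPoly_X_sub_C_succ (s : ℤ) t]
    constructor <;> simp only [map_add, map_mul, map_neg, map_one, map_natCast] <;> push_cast <;>
      ring
  | succ m ih =>
    obtain ⟨hf, ht⟩ := ih (fun l hl => ha l (by omega)) (a (m + 1))
    obtain ⟨t, hb⟩ := Nat.exists_eq_add_one.2 (ha (m + 1) le_rfl)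
    rw [pathPoly_succ_false a (m + 1) s, pathPoly_succ_true a (m + 1) s, innerFallProd,
      prod_range_succ, ← innerFallProd, prod_range_succ _ (m + 1), prod_range_succ _ (m + 1)]
    simp only [hb, Nat.cast_add, Nat.cast_one, Nat.add_sub_cancel] at hf ht ⊢
    rw [fallPoly_succ (X - C ((s : ℤ) + 1)) t, fallPoly_X_sub_C_succ (s : ℤ) t]
    simp only [map_add, map_mul, map_neg, map_one, map_natCast] at hf ht ⊢
    set φ := fallPoly (X - ((s : ℤ[X]) + 1)) t
    constructor
    · linear_combination (φ * (X - s - (t + 1))) * hf + (φ * (t + 1)) * ht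
    · linear_combination ((X - s) * φ) * hf

lemma prod_range_length_getD {M : Type*} [CommMonoid M] (L : List ℕ) (f : ℕ → M) :
    ∏ l ∈ range L.length, f (L.getD l 0) = (L.map f).prod := by
  rw [← Fin.prod_univ_fun_getElem, ← Fin.prod_univ_eq_prod_range]
  simp

lemma prodL_eq_prod_range (L : List ℕ) :
    prodL L = ∏ l ∈ range L.length, (X - C (L.getD l 0 : ℤ)) := by
  rw [prodL, prod_range_length_getD L fun a => X - C (a : ℤ)]
  simp [← List.map_eq_flatMap, Function.comp_def]

lemma negProd_eq_prod_range (L : List ℕ) :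
    negProd L = ∏ l ∈ range L.length, (-(L.getD l 0 : ℤ)) := by
  rw [negProd, prod_range_length_getD L fun a => -(a : ℤ)]
  simp [← List.map_eq_flatMap, Function.comp_def]

lemma prodL_append_singleton (L : List ℕ) (k : ℕ) :
    prodL (L ++ [k]) = prodL L * (X - C (k : ℤ)) := by
  simp [prodL]

lemma negProd_append_singleton (L : List ℕ) (k : ℕ) :
    negProd (L ++ [k]) = negProd L * -(k : ℤ) := by
  simp [negProd]

theorem pathPoly_getD_eq (L : List ℕ) (hL : L ≠ []) (hpos : ∀ a ∈ L, 0 < a) (k : ℕ)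
    (rA rB : ℤ[X]) (hrA : X * rA = prodL L - C (negProd L))
    (hrB : X * rB = prodL (L ++ [k]) - C (negProd (L ++ [k]))) :
    pathPoly (fun l => L.getD l 0) L.length k false =
        innerFallProd (fun l => L.getD l 0) (L.length - 1)
          * fallPoly (X - C ((k : ℤ) + 1)) (L.getLastD 0 - 1) * rB ∧
      pathPoly (fun l => L.getD l 0) L.length k true =
        innerFallProd (fun l => L.getD l 0) (L.length - 1)
          * fallPoly (X - C ((k : ℤ) + 1)) (L.getLastD 0 - 1) * (X - C (k : ℤ)) * rA := by
  obtain ⟨m, hm⟩ := Nat.exists_eq_add_one.2 (List.length_pos_iff.2 hL)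
  have hposL (l : ℕ) (hl : l ≤ m) : 0 < L.getD l 0 := by
    rw [List.getD_eq_getElem _ _ (by omega)]
    exact hpos _ (List.getElem_mem _)
  have hlast : L.getLastD 0 = L.getD m 0 := by
    simp [List.getLastD_eq_getLast?, List.getLast?_eq_getElem?, hm]
  obtain ⟨hf, ht⟩ := X_mul_pathPoly (fun l => L.getD l 0) m hposL k
  rw [prodL_append_singleton, negProd_append_singleton] at hrB
  rw [prodL_eq_prod_range, negProd_eq_prod_range, hm] at hrA hrB
  rw [hm, Nat.add_sub_cancel, hlast]
  set G := innerFallProd (fun l => L.getD l 0) m * fallPoly (X - C ((k : ℤ) + 1)) (L.getD m 0 - 1)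
  constructor
  · refine mul_left_cancel₀ X_ne_zero ?_
    rw [hf]
    linear_combination -G * hrB
  · refine mul_left_cancel₀ X_ne_zero ?_
    rw [ht]
    linear_combination -(G * (X - C (k : ℤ))) * hrA

theorem thetaPoly_eq {m : ℕ} (S : Fin (m + 1) → List ℕ) (hS : ∀ i, S i ≠ [])
    (hpos : ∀ i, ∀ a ∈ S i, 0 < a) (k : ℕ) (rA rB : Fin (m + 1) → ℤ[X])
    (hrA : ∀ i, X * rA i = prodL (S i) - C (negProd (S i)))
    (hrB : ∀ i, X * rB i = prodL (S i ++ [k]) - C (negProd (S i ++ [k]))) :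
    thetaPoly S k =
      fallPoly X ((S (Fin.last m)).getLastD 0 + k)
          * (∏ i ∈ univ.erase (Fin.last m),
              fallPoly (X - C ((k : ℤ) + 1)) ((S i).getLastD 0 - 1))
          * (∏ i, innerFallProd (fun l => (S i).getD l 0) ((S i).length - 1))
        * (C (k : ℤ) * (X - C (k : ℤ)) ^ m * ∏ i, rA i + ∏ i, rB i) := by
  have hpaths i := pathPoly_getD_eq (S i) (hS i) (hpos i) k (rA i) (rB i) (hrA i) (hrB i)
  rw [thetaPoly, prod_congr rfl fun i _ => (hpaths i).1, prod_congr rfl fun i _ => (hpaths i).2]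
  simp only [prod_mul_distrib, prod_const, card_univ, Fintype.card_fin]
  obtain ⟨t, ht⟩ := Nat.exists_eq_add_one.2 <|
    hpos (Fin.last m) ((S (Fin.last m)).getLastD 0) <| by
      rw [List.getLastD_eq_getLast?, List.getLast?_eq_some_getLast (hS (Fin.last m))]
      exact List.getLast_mem _
  rw [← mul_prod_erase univ (fun i => fallPoly (X - C ((k : ℤ) + 1)) ((S i).getLastD 0 - 1))
    (mem_univ (Fin.last m)), ht, Nat.add_sub_cancel, Nat.add_comm (t + 1) k, fallPoly_add,
    fallPoly_X_sub_C_succ]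
  have hstep : X * fallPoly (X - 1) k = fallPoly X k * (X - C (k : ℤ)) := by
    rw [← fallPoly_succ', fallPoly_succ]
  linear_combination ((∏ i, innerFallProd (fun l => (S i).getD l 0) ((S i).length - 1))
    * fallPoly (X - C ((k : ℤ) + 1)) t
    * (∏ i ∈ univ.erase (Fin.last m), fallPoly (X - C ((k : ℤ) + 1)) ((S i).getLastD 0 - 1))
    * (∏ i, rB i - (X - C (k : ℤ)) ^ (m + 1) * ∏ i, rA i)) * hstep

theorem chromatic_poly_of_clique_theta_general
    (m₀ : ℕ) (S : Fin (m₀ + 2) → List ℕ)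
    (hS : ∀ i, S i ≠ []) (hpos : ∀ i, ∀ a ∈ S i, 0 < a)
    (k : ℕ)
    (P : Polynomial ℤ) (hP : IsChromaticPoly (cliqueThetaGraph 1 S k) P)
    (rA rB : Fin (m₀ + 2) → Polynomial ℤ)
    (hrA : ∀ i, X * rA i = prodL (S i) - C (negProd (S i)))
    (hrB : ∀ i, X * rB i = prodL (S i ++ [k]) - C (negProd (S i ++ [k]))) :
    P = (fallPoly X ((S (Fin.last (m₀ + 1))).getLastD 0 + k)
          * (∏ i ∈ Finset.univ.erase (Fin.last (m₀ + 1)),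
              fallPoly (X - C ((k : ℤ) + 1)) ((S i).getLastD 0 - 1))
          * ∏ i : Fin (m₀ + 2), ∏ l ∈ Finset.range ((S i).length - 1),
              fallPoly (X - C (((S i).getD (l + 1) 0 : ℤ) + 1)) ((S i).getD l 0 - 1))
        * (C (k : ℤ) * (X - C (k : ℤ)) ^ (m₀ + 1) * ∏ i : Fin (m₀ + 2), rA i
            + ∏ i : Fin (m₀ + 2), rB i) := by
  refine Eq.trans ?_ (thetaPoly_eq S hS hpos k rA rB hrA hrB)
  refine eq_of_infinite_eval_eq _ _ <|
    Set.infinite_of_injective_forall_mem Nat.cast_injective fun q => ?_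
  have hcount := card_coloring_cliqueThetaGraph (α := Fin q) S k hS
  rw [Fintype.card_fin] at hcount
  rw [Set.mem_ofPred_eq, hP q, hcount]

/-- The chromatic polynomial of the clique-theta graph
`T(1, S_1, …, S_n, k)` (with `n = m₀ + 2 ≥ 2`), where `rA i` is the polynomial
`r(1, a_{i(1)}, …, a_{i(m_i)}; X)` and `rB i` is `r(1, a_{i(1)}, …, a_{i(m_i)}, k; X)`,
each characterised by `X · r = ∏ (X - a) - ∏ (-a)`. -/
theorem chromatic_poly_of_clique_theta
    (m₀ : ℕ) (S : Fin (m₀ + 2) → List ℕ)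
    (hS : ∀ i, S i ≠ []) (hpos : ∀ i, ∀ a ∈ S i, 0 < a)
    (k : ℕ) (hk : 0 < k)
    (P : Polynomial ℤ) (hP : IsChromaticPoly (cliqueThetaGraph 1 S k) P)
    (rA rB : Fin (m₀ + 2) → Polynomial ℤ)
    (hrA : ∀ i, X * rA i = prodL (S i) - C (negProd (S i)))
    (hrB : ∀ i, X * rB i = prodL (S i ++ [k]) - C (negProd (S i ++ [k]))) :
    P = (fallPoly X ((S (Fin.last (m₀ + 1))).getLastD 0 + k)
          * (∏ i ∈ Finset.univ.erase (Fin.last (m₀ + 1)),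
              fallPoly (X - C ((k : ℤ) + 1)) ((S i).getLastD 0 - 1))
          * ∏ i : Fin (m₀ + 2), ∏ l ∈ Finset.range ((S i).length - 1),
              fallPoly (X - C (((S i).getD (l + 1) 0 : ℤ) + 1)) ((S i).getD l 0 - 1))
        * (C (k : ℤ) * (X - C (k : ℤ)) ^ (m₀ + 1) * ∏ i : Fin (m₀ + 2), rA i
            + ∏ i : Fin (m₀ + 2), rB i) :=
  chromatic_poly_of_clique_theta_general m₀ S hS hpos k P hP rA rB hrA hrB
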